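/- For any ξ ∈ F_q((T^{-1})) and any positive integer n, the uniform exponent satisfies λ̂_n(ξ) = λ̂_n(ξ^p), where p is the characteristic. -/

import Mathlib

open Polynomial
open scoped Classical

namespace MahlerKoksmaFq

noncomputable section

variable (Fq : Type) [Field Fq] [Fintype Fq]

/-- `K Fq` models `F_q((T⁻¹))`: Laurent series in the variable `t = T⁻¹`. -/
abbrev K := LaurentSeries Fq

/-- The element `T` (the inverse of the Laurent-series variable `t = T⁻¹`). -/
def Tvar : K Fq := HahnSeries.single (-1 : ℤ) 1

/-- The absolute value `|ξ| = q^{-ν(ξ)}` on `F_q((T⁻¹))`. -/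
def absK (ξ : K Fq) : ℝ :=
  if ξ = 0 then 0 else (Fintype.card Fq : ℝ) ^ (-(HahnSeries.order ξ))

/-- The embedding of `F_q[T]` into `F_q((T⁻¹))`, sending `T` to `Tvar`. -/
def emb : Polynomial Fq →+* K Fq :=
  Polynomial.eval₂RingHom (algebraMap Fq (K Fq)) (Tvar Fq)

/-- Evaluation of `P ∈ F_q[T][X]` at `ξ ∈ F_q((T⁻¹))`. -/
def evalK (P : Polynomial (Polynomial Fq)) (ξ : K Fq) : K Fq :=
  P.eval₂ (emb Fq) ξ

/-- Height of a polynomial over `F_q[T]`: the maximum of the absolute values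
`q^{deg c}` of its coefficients. -/
def HP (P : Polynomial (Polynomial Fq)) : ℝ :=
  (Fintype.card Fq : ℝ) ^ (P.support.sup fun i => (P.coeff i).natDegree)

/-- `ξ` is algebraic (over `F_q[T]`) of degree at most `n`. -/
def IsAlgDegLe (ξ : K Fq) (n : ℕ) : Prop :=
  ∃ P : Polynomial (Polynomial Fq), P ≠ 0 ∧ P.natDegree ≤ n ∧ evalK Fq P ξ = 0

/-- `ξ` is algebraic over `F_q[T]`. -/
def IsAlgK (ξ : K Fq) : Prop :=
  ∃ P : Polynomial (Polynomial Fq), P ≠ 0 ∧ evalK Fq P ξ = 0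

/-- The degree of an algebraic element of `F_q((T⁻¹))`. -/
def degA (α : K Fq) : ℕ :=
  sInf {d | ∃ P : Polynomial (Polynomial Fq), P ≠ 0 ∧ P.natDegree = d ∧ evalK Fq P α = 0}

/-- The height of an algebraic element `α` of `F_q((T⁻¹))`: the least height of a
 nonzero annihilating polynomial of minimal degree (= height of the minimal
 defining polynomial over `F_q[T]`). -/
def HA (α : K Fq) : ℝ :=
  sInf {h | ∃ P : Polynomial (Polynomial Fq),
    P ≠ 0 ∧ P.natDegree = degA Fq α ∧ evalK Fq P α = 0 ∧ h = HP Fq P}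

/-- The defining set for Mahler's exponent `w_n`. -/
def wnSet (ξ : K Fq) (n : ℕ) : Set ℝ :=
  {w | {P : Polynomial (Polynomial Fq) |
      P.natDegree ≤ n ∧ 0 < absK Fq (evalK Fq P ξ) ∧
      absK Fq (evalK Fq P ξ) < HP Fq P ^ (-w)}.Infinite}

/-- Mahler's exponent `w_n(ξ)`. -/
def wn (ξ : K Fq) (n : ℕ) : EReal :=
  sSup ((fun w : ℝ => (w : EReal)) '' wnSet Fq ξ n)

/-- The defining set for `w_n^{sep}` (separable polynomials only). -/
def wnsepSet (ξ : K Fq) (n : ℕ) : Set ℝ :=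
  {w | {P : Polynomial (Polynomial Fq) |
      P.Separable ∧ P.natDegree ≤ n ∧ 0 < absK Fq (evalK Fq P ξ) ∧
      absK Fq (evalK Fq P ξ) < HP Fq P ^ (-w)}.Infinite}

/-- The exponent `w_n^{sep}(ξ)`. -/
def wnsep (ξ : K Fq) (n : ℕ) : EReal :=
  sSup ((fun w : ℝ => (w : EReal)) '' wnsepSet Fq ξ n)

/-- The defining set for Koksma's exponent `w_n^*` (approximation by algebraic
elements lying in `F_q((T⁻¹))`). -/
def wnstarSet (ξ : K Fq) (n : ℕ) : Set ℝ :=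
  {w | {α : K Fq | IsAlgK Fq α ∧ degA Fq α ≤ n ∧ 0 < absK Fq (ξ - α) ∧
      absK Fq (ξ - α) < HA Fq α ^ (-w - 1)}.Infinite}

/-- Koksma's exponent `w_n^*(ξ)`. -/
def wnstar (ξ : K Fq) (n : ℕ) : EReal :=
  sSup ((fun w : ℝ => (w : EReal)) '' wnstarSet Fq ξ n)

/-- The defining set for the uniform exponent `ŵ_n`. -/
def hwnSet (ξ : K Fq) (n : ℕ) : Set ℝ :=
  {w | ∃ H0 : ℝ, ∀ H : ℝ, H0 < H → ∃ P : Polynomial (Polynomial Fq),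
      P.natDegree ≤ n ∧ HP Fq P ≤ H ∧ 0 < absK Fq (evalK Fq P ξ) ∧
      absK Fq (evalK Fq P ξ) < H ^ (-w)}

/-- The uniform exponent `ŵ_n(ξ)`. -/
def hwn (ξ : K Fq) (n : ℕ) : EReal :=
  sSup ((fun w : ℝ => (w : EReal)) '' hwnSet Fq ξ n)

/-- The defining set for the uniform exponent `ŵ_n^{sep}` (separable polynomials only). -/
def hwnsepSet (ξ : K Fq) (n : ℕ) : Set ℝ :=
  {w | ∃ H0 : ℝ, ∀ H : ℝ, H0 < H → ∃ P : Polynomial (Polynomial Fq),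
      P.Separable ∧ P.natDegree ≤ n ∧ HP Fq P ≤ H ∧ 0 < absK Fq (evalK Fq P ξ) ∧
      absK Fq (evalK Fq P ξ) < H ^ (-w)}

/-- The uniform exponent `ŵ_n^{sep}(ξ)`. -/
def hwnsep (ξ : K Fq) (n : ℕ) : EReal :=
  sSup ((fun w : ℝ => (w : EReal)) '' hwnsepSet Fq ξ n)

/-- The fractional part of a Laurent series in `T⁻¹`: the part with only
 negative powers of `T` (positive powers of the series variable `t = T⁻¹`). -/
def fracPart (η : K Fq) : K Fq :=
  { coeff := fun m => if 0 < m then η.coeff m else 0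
    isPWO_support' := η.isPWO_support'.mono (fun m hm => by
      by_cases h : 0 < m
      · simpa [Function.mem_support, h] using hm
      · simp [Function.mem_support, h] at hm) }

/-- The fractional-part norm `‖η‖ = |η - [η]|`. -/
def fracNorm (η : K Fq) : ℝ := absK Fq (fracPart Fq η)

/-- `max{‖R(T)ξ‖, …, ‖R(T)ξⁿ‖}`. -/
def maxFrac (ξ : K Fq) (n : ℕ) (R : Polynomial Fq) : ℝ :=
  sSup ((fun i => fracNorm Fq (emb Fq R * ξ ^ i)) '' Set.Icc 1 n)

/-- The defining set for the exponent of simultaneous approximation `λ_n`. -/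
def lamSet (ξ : K Fq) (n : ℕ) : Set ℝ :=
  {l | {R : Polynomial Fq | 0 < maxFrac Fq ξ n R ∧
      maxFrac Fq ξ n R < (Fintype.card Fq : ℝ) ^ (-(l * R.natDegree))}.Infinite}

/-- The exponent of simultaneous approximation `λ_n(ξ)`. -/
def lam (ξ : K Fq) (n : ℕ) : EReal :=
  sSup ((fun w : ℝ => (w : EReal)) '' lamSet Fq ξ n)

/-- The defining set for the uniform exponent `λ̂_n`. -/
def hlamSet (ξ : K Fq) (n : ℕ) : Set ℝ :=
  {l | ∃ d0 : ℕ, ∀ d : ℕ, d0 < d → ∃ R : Polynomial Fq, R.natDegree ≤ d ∧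
      0 < maxFrac Fq ξ n R ∧
      maxFrac Fq ξ n R < (Fintype.card Fq : ℝ) ^ (-(l * d))}

/-- The uniform exponent `λ̂_n(ξ)`. -/
def hlam (ξ : K Fq) (n : ℕ) : EReal :=
  sSup ((fun w : ℝ => (w : EReal)) '' hlamSet Fq ξ n)

/-- An algebraic closure of `F_q((T⁻¹))`; its algebraic elements are exactly the
algebraic elements of the completion `C_∞`. -/
abbrev Kbar := AlgebraicClosure (K Fq)

/-- The embedding of `F_q[T]` into the algebraic closure. -/
def embbar : Polynomial Fq →+* Kbar Fq :=
  (algebraMap (K Fq) (Kbar Fq)).comp (emb Fq)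

/-- Evaluation of `P ∈ F_q[T][X]` at a point of the algebraic closure. -/
def evalKbar (P : Polynomial (Polynomial Fq)) (x : Kbar Fq) : Kbar Fq :=
  P.eval₂ (embbar Fq) x

/-- The unique extension of the absolute value of `F_q((T⁻¹))` to its algebraic
closure: `|x| = |N(x)|^{1/d} = |a_0|^{1/d}` where `a_0` is the constant term and
`d` the degree of the minimal polynomial of `x` over `F_q((T⁻¹))`. -/
def absC (x : Kbar Fq) : ℝ :=
  absK Fq ((minpoly (K Fq) x).coeff 0) ^ ((1 : ℝ) / (minpoly (K Fq) x).natDegree)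

/-- `x ∈ C_∞` is algebraic over `F_q[T]`. -/
def IsAlgKbar (x : Kbar Fq) : Prop :=
  ∃ P : Polynomial (Polynomial Fq), P ≠ 0 ∧ evalKbar Fq P x = 0

/-- Degree over `F_q[T]` of an algebraic element of `C_∞`. -/
def degAbar (x : Kbar Fq) : ℕ :=
  sInf {d | ∃ P : Polynomial (Polynomial Fq), P ≠ 0 ∧ P.natDegree = d ∧ evalKbar Fq P x = 0}

/-- Height of an algebraic element of `C_∞`. -/
def HAbar (x : Kbar Fq) : ℝ :=
  sInf {h | ∃ P : Polynomial (Polynomial Fq),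
    P ≠ 0 ∧ P.natDegree = degAbar Fq x ∧ evalKbar Fq P x = 0 ∧ h = HP Fq P}

/-- The defining set for the exponent `w_n^@` (approximation by algebraic
elements of `C_∞`). -/
def wnAtSet (ξ : K Fq) (n : ℕ) : Set ℝ :=
  {w | {α : Kbar Fq | IsAlgKbar Fq α ∧ degAbar Fq α ≤ n ∧
      0 < absC Fq (algebraMap (K Fq) (Kbar Fq) ξ - α) ∧
      absC Fq (algebraMap (K Fq) (Kbar Fq) ξ - α) < HAbar Fq α ^ (-w - 1)}.Infinite}

/-- The exponent `w_n^@(ξ)`. -/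
def wnAt (ξ : K Fq) (n : ℕ) : EReal :=
  sSup ((fun w : ℝ => (w : EReal)) '' wnAtSet Fq ξ n)

/-- The defining set for the uniform exponent `ŵ_n^@`. -/
def hwnAtSet (ξ : K Fq) (n : ℕ) : Set ℝ :=
  {w | ∃ H0 : ℝ, ∀ H : ℝ, H0 < H → ∃ α : Kbar Fq, IsAlgKbar Fq α ∧ degAbar Fq α ≤ n ∧
      HAbar Fq α ≤ H ∧ 0 < absC Fq (algebraMap (K Fq) (Kbar Fq) ξ - α) ∧
      absC Fq (algebraMap (K Fq) (Kbar Fq) ξ - α) < (HAbar Fq α)⁻¹ * H ^ (-w)}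

/-- The uniform exponent `ŵ_n^@(ξ)`. -/
def hwnAt (ξ : K Fq) (n : ℕ) : EReal :=
  sSup ((fun w : ℝ => (w : EReal)) '' hwnAtSet Fq ξ n)

/-- `w(ξ) = limsup_n w_n(ξ)/n`. -/
def wlim (ξ : K Fq) : EReal :=
  Filter.atTop.limsup fun n : ℕ => wn Fq ξ n * (((n : ℝ)⁻¹ : ℝ) : EReal)

/-- `w^*(ξ) = limsup_n w_n^*(ξ)/n`. -/
def wlimstar (ξ : K Fq) : EReal :=
  Filter.atTop.limsup fun n : ℕ => wnstar Fq ξ n * (((n : ℝ)⁻¹ : ℝ) : EReal)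

/-- Height of a polynomial over `C_∞`: maximum of the absolute values of its
coefficients. -/
def HC (P : Polynomial (Kbar Fq)) : ℝ :=
  sSup ((fun i => absC Fq (P.coeff i)) '' Set.Iic P.natDegree)

end

end MahlerKoksmaFq

/-! Write a polynomial `R` of degree at most `p d` as `R = ∑_{j<p} T^j R_j^p` with
`deg R_j ≤ d`. Taking fractional parts commutes with Frobenius, so the fractional part of
`R (ξ^p)^i` is `∑_j T^j {R_j ξ^i}^p`, a sum of terms whose orders are pairwise distinct
modulo `p`; hence `‖R_j ξ^i‖^p ≤ ‖R (ξ^p)^i‖` for every `j`, and some `R_j` keeps the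
approximation nonzero. So a uniform approximation of `ξ^p` in degree `p d` yields one of `ξ`
in degree `d` of the same quality. Conversely `R ↦ R^p` turns an approximation of `ξ` in
degree `⌊d/p⌋` into one of `ξ^p` in degree `d`, raising the error to the `p`-th power; the
rounding costs an arbitrarily small loss in the exponent. -/

theorem EReal.sSup_image_coe_le_of_forall_lt_mem {A B : Set ℝ}
    (h : ∀ a ∈ A, ∀ b < a, b ∈ B) :
    sSup (((↑) : ℝ → EReal) '' A) ≤ sSup (((↑) : ℝ → EReal) '' B) := by
  refine sSup_le ?_
  rintro _ ⟨a, ha, rfl⟩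
  refine le_of_forall_lt_imp_le_of_dense fun z hz => ?_
  induction z using EReal.rec with
  | bot => exact bot_le
  | coe b => exact le_sSup ⟨b, h a ha b (EReal.coe_lt_coe_iff.mp hz), rfl⟩
  | top => exact absurd hz (not_lt.mpr le_top)

theorem Real.rpow_neg_mul_natCast_pow {x : ℝ} (hx : 0 ≤ x) (l : ℝ) (p e : ℕ) :
    (x ^ (-(l * e))) ^ p = x ^ (-(l * ((p * e : ℕ) : ℝ))) := by
  rw [← Real.rpow_natCast, ← Real.rpow_mul hx]
  push_cast
  ring_nf

/-- Rounding `d` down to a multiple of `p` costs a bounded amount, which the gap `l - l'` absorbs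
for large `d`. -/
theorem eventually_mul_le_mul_natCast_mul_div {l l' : ℝ} (h : l' < l) {p : ℕ} (hp : 0 < p) :
    ∀ᶠ d : ℕ in Filter.atTop, l' * d ≤ l * ((p * (d / p) : ℕ) : ℝ) := by
  obtain ⟨N, hN⟩ := exists_nat_ge (|l| * p / (l - l'))
  filter_upwards [Filter.eventually_ge_atTop N] with d hd
  have hle : ((p * (d / p) : ℕ) : ℝ) ≤ d := by exact_mod_cast Nat.mul_div_le d p
  have hlt : (d : ℝ) < (p * (d / p) : ℕ) + p := by
    exact_mod_cast (Nat.lt_div_mul_add hp).trans_eq (by rw [mul_comm])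
  have hgap : |l| * p ≤ (l - l') * d :=
    (div_le_iff₀' (sub_pos.mpr h)).mp (hN.trans (by exact_mod_cast hd))
  have hround : |l * (((p * (d / p) : ℕ) : ℝ) - d)| ≤ |l| * p := by
    rw [abs_mul]
    exact mul_le_mul_of_nonneg_left (abs_le.mpr ⟨by linarith, by linarith⟩) (abs_nonneg l)
  linarith [neg_abs_le (l * (((p * (d / p) : ℕ) : ℝ) - d))]

namespace Polynomial

variable {F : Type*} [CommSemiring F] (p : ℕ) [ExpChar F p] [PerfectRing F p]

noncomputable def pthRootComponent (R : F[X]) (j : ℕ) : F[X] :=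
  ∑ m ∈ R.support with m % p = j, C ((frobeniusEquiv F p).symm (R.coeff m)) * X ^ (m / p)

theorem sum_X_pow_mul_pthRootComponent_pow (R : F[X]) :
    ∑ j ∈ Finset.range p, X ^ j * pthRootComponent p R j ^ p = R := by
  have hterm : ∀ m, X ^ (m % p) * (C ((frobeniusEquiv F p).symm (R.coeff m)) * X ^ (m / p)) ^ p
      = C (R.coeff m) * X ^ m := by
    intro m
    rw [mul_pow, ← C_pow, frobeniusEquiv_symm_pow_p, ← pow_mul, mul_left_comm, ← pow_add,
      mul_comm (m / p), Nat.mod_add_div]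
  calc ∑ j ∈ Finset.range p, X ^ j * pthRootComponent p R j ^ p
      = ∑ j ∈ Finset.range p, ∑ m ∈ R.support with m % p = j, C (R.coeff m) * X ^ m := by
        refine Finset.sum_congr rfl fun j _ => ?_
        rw [pthRootComponent, ← frobenius_def (R := F[X]) (p := p), map_sum, Finset.mul_sum]
        refine Finset.sum_congr rfl fun m hm => ?_
        rw [frobenius_def, ← (Finset.mem_filter.mp hm).2, hterm]
    _ = R := by
        rw [Finset.sum_fiberwise_of_maps_to fun m _ =>
          Finset.mem_range.mpr (Nat.mod_lt m (expChar_pos F p))]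
        exact R.as_sum_support_C_mul_X_pow.symm

theorem natDegree_pthRootComponent_le {R : F[X]} {d : ℕ} (hR : R.natDegree ≤ p * d) (j : ℕ) :
    (pthRootComponent p R j).natDegree ≤ d := by
  refine natDegree_sum_le_of_forall_le _ _ fun m hm => (natDegree_C_mul_X_pow_le _ _).trans ?_
  have hm : m ≤ p * d := (le_natDegree_of_mem_supp m (Finset.mem_filter.mp hm).1).trans hR
  exact Nat.div_le_of_le_mul hm

end Polynomial

instance HahnSeries.instCharP {Γ R : Type*} [AddCommMonoid Γ] [PartialOrder Γ]
    [IsOrderedCancelAddMonoid Γ] [Semiring R] (p : ℕ) [CharP R p] : CharP (HahnSeries Γ R) p :=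
  charP_of_injective_ringHom HahnSeries.C_injective p

namespace HahnSeries

variable {Γ R : Type*} [LinearOrder Γ] [AddCommMonoid R]

theorem orderTop_sum_of_pairwise_ne {ι : Type*} [DecidableEq ι] {s : Finset ι}
    {f : ι → HahnSeries Γ R}
    (hf : (s : Set ι).Pairwise fun i j =>
      f i ≠ 0 → f j ≠ 0 → (f i).orderTop ≠ (f j).orderTop) :
    (∑ i ∈ s, f i).orderTop = s.inf fun i => (f i).orderTop := by
  induction s using Finset.induction_on with
  | empty => simp
  | insert a s ha ih =>
    have ih := ih (hf.mono (by simp only [Finset.coe_insert, Set.subset_insert]))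
    rw [Finset.sum_insert ha, Finset.inf_insert, ← ih]
    rcases eq_or_ne (f a) 0 with hfa | hfa
    · simp [hfa]
    have hne : (f a).orderTop ≠ (∑ i ∈ s, f i).orderTop := by
      rw [ih]
      rcases s.eq_empty_or_nonempty with rfl | hs
      · simpa using hfa
      obtain ⟨i, hi, hinf⟩ := s.exists_mem_eq_inf hs fun i => (f i).orderTop
      rw [hinf]
      rcases eq_or_ne (f i) 0 with hfi | hfi
      · simpa [hfi] using hfa
      exact hf (by simp) (by simp [hi]) (fun h => ha (h ▸ hi)) hfa hfi
    rcases hne.lt_or_gt with h | h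
    · exact (orderTop_add_eq_left h).trans (min_eq_left h.le).symm
    · exact (orderTop_add_eq_right h).trans (min_eq_right h.le).symm

end HahnSeries

namespace MahlerKoksmaFq

section LaurentSeries

variable {Fq : Type} [Field Fq]

theorem Tvar_pow (j : ℕ) : Tvar Fq ^ j = HahnSeries.single (-(j : ℤ)) 1 := by
  rw [Tvar, HahnSeries.single_pow, one_pow, nsmul_eq_mul, mul_neg_one]

theorem Tvar_ne_zero : Tvar Fq ≠ 0 := HahnSeries.single_ne_zero one_ne_zero

theorem order_Tvar_pow (j : ℕ) : (Tvar Fq ^ j).order = -(j : ℤ) := by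
  rw [Tvar_pow, HahnSeries.order_single one_ne_zero]

theorem emb_X : emb Fq X = Tvar Fq := eval₂_X _ _

variable (Fq) in
/-- The Laurent series supported on nonpositive powers of `t = T⁻¹`, i.e. the polynomials
in `T`. -/
def polySubring : Subring (K Fq) where
  carrier := {x | ∀ m ∈ x.support, m ≤ 0}
  mul_mem' {x y} hx hy m hm := by
    obtain ⟨u, hu, v, hv, rfl⟩ := Set.mem_add.mp (HahnSeries.support_mul_subset hm)
    exact add_nonpos (hx u hu) (hy v hv)
  one_mem' m hm := by
    rw [HahnSeries.support_one, Set.mem_singleton_iff] at hm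
    exact hm.le
  add_mem' {x y} hx hy m hm := by
    rcases HahnSeries.support_add_subset x y hm with hm | hm
    exacts [hx m hm, hy m hm]
  zero_mem' m hm := by simp at hm
  neg_mem' {x} hx m hm := hx m (by simpa using hm)

theorem Tvar_pow_mem_polySubring (j : ℕ) : Tvar Fq ^ j ∈ polySubring Fq := fun m hm => by
  rw [Tvar_pow] at hm
  have := HahnSeries.support_single_subset hm
  simp only [Set.mem_singleton_iff] at this
  omega

theorem fracPart_coeff (x : K Fq) (m : ℤ) :
    (fracPart Fq x).coeff m = if 0 < m then x.coeff m else 0 := rfl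

theorem fracPart_add (x y : K Fq) : fracPart Fq (x + y) = fracPart Fq x + fracPart Fq y := by
  ext m
  simp only [fracPart_coeff, HahnSeries.coeff_add]
  split_ifs <;> simp

theorem fracPart_sum {ι : Type*} (s : Finset ι) (f : ι → K Fq) :
    fracPart Fq (∑ i ∈ s, f i) = ∑ i ∈ s, fracPart Fq (f i) :=
  map_sum (AddMonoidHom.mk' (fracPart Fq) fracPart_add) f s

theorem fracPart_eq_zero_of_mem {x : K Fq} (hx : x ∈ polySubring Fq) : fracPart Fq x = 0 := by
  ext m
  rw [fracPart_coeff, HahnSeries.coeff_zero]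
  split_ifs with hm
  · by_contra hc
    exact (hx m ((HahnSeries.mem_support x m).mpr hc)).not_gt hm
  · rfl

theorem sub_fracPart_mem (x : K Fq) : x - fracPart Fq x ∈ polySubring Fq := fun m hm => by
  by_contra h
  rw [HahnSeries.mem_support, HahnSeries.coeff_sub, fracPart_coeff, if_pos (not_le.mp h),
    sub_self] at hm
  exact hm rfl

theorem fracPart_eq_self_of_order_pos {x : K Fq} (hx : 0 < x.order) : fracPart Fq x = x := by
  ext m
  rw [fracPart_coeff]
  split_ifs with hm
  · rfl
  · by_contra hc
    exact hm (hx.trans_le (HahnSeries.order_le_of_coeff_ne_zero (Ne.symm hc)))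

theorem order_fracPart_pos {x : K Fq} (hx : fracPart Fq x ≠ 0) : 0 < (fracPart Fq x).order := by
  have h := mt HahnSeries.coeff_order_eq_zero.mp hx
  rw [fracPart_coeff] at h
  by_contra hc
  exact h (if_neg hc)

theorem order_Tvar_pow_mul_pow (p : ℕ) {y : K Fq} (hy : y ≠ 0) (j : ℕ) :
    (Tvar Fq ^ j * y ^ p).order = -(j : ℤ) + p * y.order := by
  rw [HahnSeries.order_mul (pow_ne_zero _ Tvar_ne_zero) (pow_ne_zero _ hy), order_Tvar_pow,
    HahnSeries.order_pow, nsmul_eq_mul]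

/-- The terms have pairwise distinct orders, as these are `-j` modulo `p`. -/
theorem orderTop_sum_Tvar_pow_mul_pow_le (p : ℕ) (y : ℕ → K Fq) {j : ℕ} (hj : j < p) :
    (∑ i ∈ Finset.range p, Tvar Fq ^ i * y i ^ p).orderTop ≤
      (Tvar Fq ^ j * y j ^ p).orderTop := by
  rw [HahnSeries.orderTop_sum_of_pairwise_ne]
  · exact Finset.inf_le (Finset.mem_range.mpr hj)
  intro a ha b hb hab hya hyb
  have hya' : y a ≠ 0 := fun h => hya (by simp [h, (Nat.zero_lt_of_lt hj).ne'])
  have hyb' : y b ≠ 0 := fun h => hyb (by simp [h, (Nat.zero_lt_of_lt hj).ne'])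
  rw [← HahnSeries.order_eq_orderTop_of_ne_zero hya,
    ← HahnSeries.order_eq_orderTop_of_ne_zero hyb, order_Tvar_pow_mul_pow p hya',
    order_Tvar_pow_mul_pow p hyb', Ne, WithTop.coe_eq_coe]
  intro h
  have ha' : (a : ℤ) < p := by exact_mod_cast Finset.mem_range.mp ha
  have hb' : (b : ℤ) < p := by exact_mod_cast Finset.mem_range.mp hb
  have hmod : (a : ℤ) % p = (b : ℤ) % p := by
    rw [show (a : ℤ) = b + p * (y a).order - p * (y b).order by linarith, add_sub_assoc,
      ← mul_sub, Int.add_mul_emod_self_left]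
  rw [Int.emod_eq_of_lt (Int.natCast_nonneg a) ha', Int.emod_eq_of_lt (Int.natCast_nonneg b) hb']
    at hmod
  exact hab (by exact_mod_cast hmod)

variable (p : ℕ) [Fact p.Prime] [CharP Fq p]

/-- Frobenius respects the splitting of `x` into polynomial and fractional parts, and `T ^ j` with
`j < p` cannot push `(fracPart x) ^ p`, of order at least `p`, into the polynomial part. -/
theorem fracPart_Tvar_pow_mul_pow_char {j : ℕ} (hj : j < p) (x : K Fq) :
    fracPart Fq (Tvar Fq ^ j * x ^ p) = Tvar Fq ^ j * fracPart Fq x ^ p := by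
  have hsplit : x ^ p = (x - fracPart Fq x) ^ p + fracPart Fq x ^ p := by
    rw [← add_pow_char, sub_add_cancel]
  rw [hsplit, mul_add, fracPart_add, fracPart_eq_zero_of_mem (Subring.mul_mem _
    (Tvar_pow_mem_polySubring j) (Subring.pow_mem _ (sub_fracPart_mem x) p)), zero_add]
  rcases eq_or_ne (fracPart Fq x) 0 with h0 | h0
  · rw [h0, zero_pow (Fact.out : p.Prime).ne_zero, mul_zero, fracPart_eq_zero_of_mem
      (Subring.zero_mem _)]
  refine fracPart_eq_self_of_order_pos ?_
  have hord := order_fracPart_pos h0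
  rw [HahnSeries.order_mul (pow_ne_zero _ Tvar_ne_zero) (pow_ne_zero _ h0), order_Tvar_pow,
    HahnSeries.order_pow, nsmul_eq_mul]
  nlinarith

theorem fracPart_pow_char (x : K Fq) : fracPart Fq (x ^ p) = fracPart Fq x ^ p := by
  simpa using fracPart_Tvar_pow_mul_pow_char p (Fact.out : p.Prime).pos x

end LaurentSeries

section AbsoluteValue

variable {Fq : Type} [Field Fq] [Fintype Fq]

variable (Fq) in
theorem one_lt_card : (1 : ℝ) < Fintype.card Fq := by
  exact_mod_cast Fintype.one_lt_card

variable (Fq) in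
theorem absK_zero : absK Fq 0 = 0 := if_pos rfl

theorem absK_nonneg (x : K Fq) : 0 ≤ absK Fq x := by
  unfold absK
  split_ifs
  exacts [le_rfl, (zpow_pos (zero_lt_one.trans (one_lt_card Fq)) _).le]

theorem absK_pos {x : K Fq} (hx : x ≠ 0) : 0 < absK Fq x := by
  rw [absK, if_neg hx]
  exact zpow_pos (zero_lt_one.trans (one_lt_card Fq)) _

theorem absK_mul (x y : K Fq) : absK Fq (x * y) = absK Fq x * absK Fq y := by
  rcases eq_or_ne x 0 with rfl | hx
  · simp [absK_zero]
  rcases eq_or_ne y 0 with rfl | hy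
  · simp [absK_zero]
  rw [absK, absK, absK, if_neg hx, if_neg hy, if_neg (mul_ne_zero hx hy),
    HahnSeries.order_mul hx hy, neg_add, zpow_add₀ (zero_lt_one.trans (one_lt_card Fq)).ne']

theorem absK_pow (x : K Fq) (k : ℕ) : absK Fq (x ^ k) = absK Fq x ^ k := by
  induction k with
  | zero => simp [absK]
  | succ k ih => rw [pow_succ, pow_succ, absK_mul, ih]

theorem absK_le_absK_of_orderTop_le {x y : K Fq} (h : y.orderTop ≤ x.orderTop) :
    absK Fq x ≤ absK Fq y := by
  rcases eq_or_ne x 0 with rfl | hx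
  · exact absK_zero Fq ▸ absK_nonneg y
  have hy : y ≠ 0 := by
    rintro rfl
    simp [HahnSeries.orderTop_eq_top, hx] at h
  rw [absK, absK, if_neg hx, if_neg hy]
  refine zpow_le_zpow_right₀ (one_lt_card Fq).le (neg_le_neg ?_)
  rwa [← HahnSeries.order_eq_orderTop_of_ne_zero hx,
    ← HahnSeries.order_eq_orderTop_of_ne_zero hy, WithTop.coe_le_coe] at h

theorem one_le_absK_Tvar_pow (j : ℕ) : 1 ≤ absK Fq (Tvar Fq ^ j) := by
  rw [absK, if_neg (pow_ne_zero _ Tvar_ne_zero), order_Tvar_pow, neg_neg]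
  exact one_le_zpow₀ (one_lt_card Fq).le (Int.natCast_nonneg j)

theorem absK_pow_le_absK_sum_Tvar_pow_mul_pow (p : ℕ) (y : ℕ → K Fq)
    {j : ℕ} (hj : j < p) :
    absK Fq (y j) ^ p ≤ absK Fq (∑ i ∈ Finset.range p, Tvar Fq ^ i * y i ^ p) :=
  calc absK Fq (y j) ^ p ≤ absK Fq (Tvar Fq ^ j) * absK Fq (y j) ^ p :=
        le_mul_of_one_le_left (pow_nonneg (absK_nonneg _) p) (one_le_absK_Tvar_pow j)
    _ = absK Fq (Tvar Fq ^ j * y j ^ p) := by rw [absK_mul, absK_pow (y j)]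
    _ ≤ _ := absK_le_absK_of_orderTop_le (orderTop_sum_Tvar_pow_mul_pow_le p y hj)

end AbsoluteValue

section Frobenius

variable {Fq : Type} [Field Fq] [Fintype Fq]

theorem fracNorm_nonneg (x : K Fq) : 0 ≤ fracNorm Fq x := absK_nonneg _

theorem fracNorm_pos_iff {x : K Fq} : 0 < fracNorm Fq x ↔ fracPart Fq x ≠ 0 :=
  ⟨fun h h0 => by simp [fracNorm, h0, absK_zero] at h, fun h => absK_pos h⟩

theorem maxFrac_nonneg (ξ : K Fq) (n : ℕ) (R : Fq[X]) : 0 ≤ maxFrac Fq ξ n R :=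
  Real.sSup_nonneg (Set.forall_mem_image.mpr fun _ _ => fracNorm_nonneg _)

theorem le_maxFrac (ξ : K Fq) {n i : ℕ} (hi : i ∈ Set.Icc 1 n) (R : Fq[X]) :
    fracNorm Fq (emb Fq R * ξ ^ i) ≤ maxFrac Fq ξ n R :=
  le_csSup ((Set.finite_Icc 1 n).image _).bddAbove (Set.mem_image_of_mem _ hi)

theorem exists_fracNorm_eq_maxFrac {ξ : K Fq} {n : ℕ} {R : Fq[X]} (h : 0 < maxFrac Fq ξ n R) :
    ∃ i ∈ Set.Icc 1 n, fracNorm Fq (emb Fq R * ξ ^ i) = maxFrac Fq ξ n R := by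
  have hne : ((fun i => fracNorm Fq (emb Fq R * ξ ^ i)) '' Set.Icc 1 n).Nonempty := by
    by_contra hempty
    rw [maxFrac, Set.not_nonempty_iff_eq_empty.mp hempty, Real.sSup_empty] at h
    exact h.false
  exact hne.csSup_mem ((Set.finite_Icc 1 n).image _)

theorem maxFrac_pow_le {ξ : K Fq} {n k : ℕ} {R : Fq[X]} {c : ℝ} (hk : k ≠ 0) (hc : 0 ≤ c)
    (h : ∀ i ∈ Set.Icc 1 n, fracNorm Fq (emb Fq R * ξ ^ i) ^ k ≤ c) :
    maxFrac Fq ξ n R ^ k ≤ c := by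
  rcases (maxFrac_nonneg ξ n R).eq_or_lt with h0 | hpos
  · rwa [← h0, zero_pow hk]
  obtain ⟨i, hi, hmax⟩ := exists_fracNorm_eq_maxFrac hpos
  exact hmax ▸ h i hi

variable (p : ℕ) [Fact p.Prime] [CharP Fq p]

theorem fracNorm_pow_char (x : K Fq) : fracNorm Fq (x ^ p) = fracNorm Fq x ^ p := by
  rw [fracNorm, fracNorm, fracPart_pow_char, absK_pow]

theorem fracPart_emb_mul_pow_char (R : Fq[X]) (η : K Fq) :
    fracPart Fq (emb Fq R * η ^ p) = ∑ j ∈ Finset.range p,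
      Tvar Fq ^ j * fracPart Fq (emb Fq (R.pthRootComponent p j) * η) ^ p := by
  conv_lhs => rw [← R.sum_X_pow_mul_pthRootComponent_pow p]
  rw [map_sum, Finset.sum_mul, fracPart_sum]
  refine Finset.sum_congr rfl fun j hj => ?_
  rw [← fracPart_Tvar_pow_mul_pow_char p (Finset.mem_range.mp hj), map_mul, map_pow, map_pow,
    emb_X, mul_pow, mul_assoc]

theorem fracNorm_pthRootComponent_pow_le (R : Fq[X]) (η : K Fq) {j : ℕ} (hj : j < p) :
    fracNorm Fq (emb Fq (R.pthRootComponent p j) * η) ^ p ≤ fracNorm Fq (emb Fq R * η ^ p) := by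
  unfold fracNorm
  rw [fracPart_emb_mul_pow_char]
  exact absK_pow_le_absK_sum_Tvar_pow_mul_pow p
    (fun i => fracPart Fq (emb Fq (R.pthRootComponent p i) * η)) hj

theorem exists_fracNorm_pthRootComponent_pos {R : Fq[X]} {η : K Fq}
    (h : 0 < fracNorm Fq (emb Fq R * η ^ p)) :
    ∃ j < p, 0 < fracNorm Fq (emb Fq (R.pthRootComponent p j) * η) := by
  by_contra! hall
  rw [fracNorm_pos_iff, fracPart_emb_mul_pow_char] at h
  refine h (Finset.sum_eq_zero fun j hj => ?_)
  have h0 : fracPart Fq (emb Fq (R.pthRootComponent p j) * η) = 0 := by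
    by_contra hne
    exact (hall j (Finset.mem_range.mp hj)).not_gt (fracNorm_pos_iff.mpr hne)
  rw [h0, zero_pow (Fact.out : p.Prime).ne_zero, mul_zero]

theorem maxFrac_pow_char (ξ : K Fq) (n : ℕ) (R : Fq[X]) :
    maxFrac Fq (ξ ^ p) n (R ^ p) = maxFrac Fq ξ n R ^ p := by
  have hterm (i : ℕ) :
      fracNorm Fq (emb Fq (R ^ p) * (ξ ^ p) ^ i) = fracNorm Fq (emb Fq R * ξ ^ i) ^ p := by
    rw [map_pow, pow_right_comm, ← mul_pow, fracNorm_pow_char]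
  refine le_antisymm (Real.sSup_le (Set.forall_mem_image.mpr fun i hi => ?_)
    (pow_nonneg (maxFrac_nonneg ξ n R) p)) (maxFrac_pow_le (Fact.out : p.Prime).ne_zero
      (maxFrac_nonneg _ n _) fun i hi => hterm i ▸ le_maxFrac _ hi _)
  exact hterm i ▸ pow_le_pow_left₀ (fracNorm_nonneg _) (le_maxFrac ξ hi R) p

theorem maxFrac_pthRootComponent_pow_le (ξ : K Fq) (n : ℕ) (R : Fq[X]) {j : ℕ} (hj : j < p) :
    maxFrac Fq ξ n (R.pthRootComponent p j) ^ p ≤ maxFrac Fq (ξ ^ p) n R :=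
  maxFrac_pow_le (Fact.out : p.Prime).ne_zero (maxFrac_nonneg _ n R) fun i hi => by
    have hle := le_maxFrac (ξ ^ p) hi R
    rw [pow_right_comm] at hle
    exact (fracNorm_pthRootComponent_pow_le p R (ξ ^ i) hj).trans hle

theorem exists_maxFrac_pthRootComponent_pos {ξ : K Fq} {n : ℕ} {R : Fq[X]}
    (h : 0 < maxFrac Fq (ξ ^ p) n R) :
    ∃ j < p, 0 < maxFrac Fq ξ n (R.pthRootComponent p j) := by
  obtain ⟨i, hi, hmax⟩ := exists_fracNorm_eq_maxFrac h
  rw [← hmax, pow_right_comm] at h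
  obtain ⟨j, hj, hpos⟩ := exists_fracNorm_pthRootComponent_pos p h
  exact ⟨j, hj, hpos.trans_le (le_maxFrac ξ hi _)⟩

end Frobenius

section Exponent

variable {Fq : Type} [Field Fq] [Fintype Fq] (p : ℕ) [Fact p.Prime] [CharP Fq p]

theorem hlamSet_pow_char_subset (ξ : K Fq) (n : ℕ) :
    hlamSet Fq (ξ ^ p) n ⊆ hlamSet Fq ξ n := by
  rintro l ⟨d0, hd0⟩
  refine ⟨d0, fun d hd => ?_⟩
  obtain ⟨R, hRdeg, hRpos, hRlt⟩ :=
    hd0 (p * d) (hd.trans_le (Nat.le_mul_of_pos_left d (Fact.out : p.Prime).pos))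
  obtain ⟨j, hj, hpos⟩ := exists_maxFrac_pthRootComponent_pos p hRpos
  refine ⟨R.pthRootComponent p j, natDegree_pthRootComponent_le p hRdeg j, hpos,
    lt_of_pow_lt_pow_left₀ p (by positivity) ?_⟩
  rw [Real.rpow_neg_mul_natCast_pow (Nat.cast_nonneg _)]
  exact (maxFrac_pthRootComponent_pow_le p ξ n R hj).trans_lt hRlt

theorem mem_hlamSet_pow_char_of_lt {ξ : K Fq} {n : ℕ} {l l' : ℝ} (hl : l ∈ hlamSet Fq ξ n)
    (hl' : l' < l) : l' ∈ hlamSet Fq (ξ ^ p) n := by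
  have hp := (Fact.out : p.Prime).pos
  obtain ⟨d0, hd0⟩ := hl
  obtain ⟨D, hD⟩ := Filter.eventually_atTop.mp (eventually_mul_le_mul_natCast_mul_div hl' hp)
  refine ⟨max (p * (d0 + 1)) D, fun d hd => ?_⟩
  have he : d0 < d / p :=
    (Nat.le_div_iff_mul_le hp).mpr (by rw [mul_comm]; exact (le_max_left _ _).trans hd.le)
  obtain ⟨R, hRdeg, hRpos, hRlt⟩ := hd0 (d / p) he
  refine ⟨R ^ p, ?_, ?_, ?_⟩
  · exact natDegree_pow_le.trans ((Nat.mul_le_mul_left p hRdeg).trans (Nat.mul_div_le d p))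
  · rw [maxFrac_pow_char]
    exact pow_pos hRpos p
  · rw [maxFrac_pow_char]
    calc maxFrac Fq ξ n R ^ p < ((Fintype.card Fq : ℝ) ^ (-(l * (d / p : ℕ)))) ^ p :=
          pow_lt_pow_left₀ hRlt (maxFrac_nonneg ξ n R) hp.ne'
      _ = (Fintype.card Fq : ℝ) ^ (-(l * ((p * (d / p) : ℕ) : ℝ))) :=
          Real.rpow_neg_mul_natCast_pow (Nat.cast_nonneg _) l p (d / p)
      _ ≤ (Fintype.card Fq : ℝ) ^ (-(l' * d)) :=
          Real.rpow_le_rpow_of_exponent_le (one_lt_card Fq).le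
            (neg_le_neg (hD d ((le_max_right _ _).trans hd.le)))

end Exponent

theorem hlam_frobenius_general (p : ℕ) [Fact p.Prime] (Fq : Type) [Field Fq] [Fintype Fq] [CharP Fq p]
    (ξ : K Fq) (n : ℕ) :
    hlam Fq ξ n = hlam Fq (ξ ^ p) n :=
  le_antisymm
    (EReal.sSup_image_coe_le_of_forall_lt_mem fun _ hl _ hl' =>
      mem_hlamSet_pow_char_of_lt p hl hl')
    (sSup_le_sSup (Set.image_mono (hlamSet_pow_char_subset p ξ n)))

/-- `λ̂_n(ξ) = λ̂_n(ξ^p)`. -/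
theorem hlam_frobenius (p : ℕ) [Fact p.Prime] (Fq : Type) [Field Fq] [Fintype Fq] [CharP Fq p]
    (ξ : K Fq) (n : ℕ) (hn : 1 ≤ n) :
    hlam Fq ξ n = hlam Fq (ξ ^ p) n :=
  hlam_frobenius_general p Fq ξ n

end MahlerKoksmaFq
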